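/- arXiv:1009.0639 — 3 statements merged into one kernel-verified Lean document; each statement's English description precedes it below -/
import Mathlib

section
/- There exists a dense Gδ subset R of P([0,1]^d) (with the weak topology) such that for every measure μ ∈ R and every x ∈ [0,1]^d one has h_μ(x) ≤ d; equivalently, for every μ ∈ R the level set E_μ(h) is empty for every h > d. -/
open MeasureTheory Metric Filter Set
open scoped ENNReal NNReal Topology

noncomputable section

/-- The unit cube `[0,1]^d` of `ℝ^d` equipped with the supremum metric,
viewed as a (compact) metric space. -/
abbrev Cube (d : ℕ) : Type := ↥(Set.Icc (0 : Fin d → ℝ) 1)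

/-- The local (lower) dimension `h_μ(x) = liminf_{r → 0⁺} log μ(B(x,r)) / log r`. -/
noncomputable def locDim {d : ℕ} (μ : Measure (Cube d)) (x : Cube d) : EReal :=
  Filter.liminf
    (fun r : ℝ => ENNReal.log (μ (Metric.ball x r)) / (Real.log r : EReal))
    (nhdsWithin 0 (Set.Ioi 0))

/-- The level set `E_μ(h) = {x : h_μ(x) = h}`. -/
def levelSet {d : ℕ} (μ : Measure (Cube d)) (h : ℝ) : Set (Cube d) :=
  {x | locDim μ x = (h : EReal)}

/-- The dyadic cube `I_{j,k} = ∏ᵢ [kᵢ 2^{-j}, (kᵢ+1) 2^{-j})`, as a subset of the cube. -/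
def dyadicCube (d j : ℕ) (k : Fin d → Fin (2 ^ j)) : Set (Cube d) :=
  {x | ∀ i, (k i : ℝ) / 2 ^ j ≤ (x : Fin d → ℝ) i ∧ (x : Fin d → ℝ) i < ((k i : ℝ) + 1) / 2 ^ j}

/-- `s_j(q) = Σ_{Q ∈ G_j, μ(Q) ≠ 0} μ(Q)^q`. -/
def dyadicSum {d : ℕ} (μ : Measure (Cube d)) (q : ℝ) (j : ℕ) : ℝ :=
  ∑ k ∈ Finset.univ.filter (fun k : Fin d → Fin (2 ^ j) => μ (dyadicCube d j k) ≠ 0),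
    (μ (dyadicCube d j k)).toReal ^ q

/-- The `L^q`-spectrum `τ_μ(q) = liminf_j -(1/j) log₂ s_j(q)`. -/
def lqSpectrum {d : ℕ} (μ : Measure (Cube d)) (q : ℝ) : EReal :=
  Filter.liminf
    (fun j : ℕ => ((-(1 / (j : ℝ)) * Real.logb 2 (dyadicSum μ q j) : ℝ) : EReal))
    Filter.atTop


/-!
Mixing a measure `μ` with Lebesgue measure `λ` gives measures `(1 - p) μ + p λ` that charge
every ball `B(x, r)`, `r ≤ 1`, with mass at least `p r^d`, and that converge weakly to `μ` as
`p → 0`. A lower bound `c < ν(B(y, r/2))` on the finitely many balls of an `r/2`-net is an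
open condition on `ν` and forces `c < ν(B(x, r))` for every `x`. Hence, for each `n`, the measures
having some scale `r < 1/(n+1)` with `r^(d + 1/(n+1)) < μ(B(x, r))` for all `x` contain a dense
open set, and on the intersection of these open sets `h_μ(x) ≤ d + 1/(n+1)` for every `n`.
-/

open unitInterval

namespace MeasureTheory.ProbabilityMeasure

variable {Ω : Type*} [MeasurableSpace Ω]

def mix (p : I) (μ ν : ProbabilityMeasure Ω) : ProbabilityMeasure Ω :=
  ⟨toNNReal p • (ν : Measure Ω) + toNNReal (σ p) • (μ : Measure Ω), inferInstance⟩

@[simp]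
lemma mix_zero (μ ν : ProbabilityMeasure Ω) : mix 0 μ ν = μ := by
  ext1; simp [mix]

lemma mul_apply_le_mix_apply (p : I) (μ ν : ProbabilityMeasure Ω) (s : Set Ω) :
    toNNReal p * (ν : Measure Ω) s ≤ (mix p μ ν : Measure Ω) s := by
  simp only [mix, coe_mk, Measure.coe_add, Measure.coe_smul, Pi.add_apply, Pi.smul_apply,
    ENNReal.smul_def, smul_eq_mul]
  exact le_self_add

variable [TopologicalSpace Ω] [OpensMeasurableSpace Ω]

lemma continuous_mix (μ ν : ProbabilityMeasure Ω) : Continuous fun p : I ↦ mix p μ ν := by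
  refine (toFiniteMeasure_isEmbedding Ω).continuous_iff.2 ?_
  change Continuous fun p : I ↦
    toNNReal p • ν.toFiniteMeasure + toNNReal (σ p) • μ.toFiniteMeasure
  fun_prop

lemma isOpen_setOf_lt_apply [HasOuterApproxClosed Ω] {G : Set Ω} (hG : IsOpen G) (c : ℝ≥0∞) :
    IsOpen {μ : ProbabilityMeasure Ω | c < (μ : Measure Ω) G} :=
  (lowerSemicontinuous_iff_le_liminf.2 fun _ ↦
    le_liminf_measure_open_of_tendsto tendsto_id hG).isOpen_preimage c

end MeasureTheory.ProbabilityMeasure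

open MeasureTheory.ProbabilityMeasure

section HeavyBalls

variable (X : Type*) [PseudoMetricSpace X] [MeasurableSpace X] [OpensMeasurableSpace X]

def heavyBallMeasures (D : ℝ) : Set (ProbabilityMeasure X) :=
  ⋂ n : ℕ, ⋃ r ∈ Ioo (0 : ℝ) (1 / (n + 1)),
    interior {μ | ∀ x, ENNReal.ofReal (r ^ (D + 1 / (n + 1))) < (μ : Measure X) (ball x r)}

lemma isGδ_heavyBallMeasures (D : ℝ) : IsGδ (heavyBallMeasures X D) :=
  .iInter_of_isOpen fun _ ↦ isOpen_biUnion fun _ _ ↦ isOpen_interior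

variable {X} [CompactSpace X]

lemma mem_interior_setOf_forall_lt_apply_ball {μ : ProbabilityMeasure X} {r : ℝ} (hr : 0 < r)
    {c : ℝ≥0∞} (hμ : ∀ x, c < (μ : Measure X) (ball x (r / 2))) :
    μ ∈ interior {ν : ProbabilityMeasure X | ∀ x, c < (ν : Measure X) (ball x r)} := by
  obtain ⟨F, -, hF, hcover⟩ :=
    finite_cover_balls_of_compact (isCompact_univ (X := X)) (half_pos hr)
  have hopen :
      IsOpen (⋂ y ∈ F, {ν : ProbabilityMeasure X | c < (ν : Measure X) (ball y (r / 2))}) :=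
    hF.isOpen_biInter fun y _ ↦ isOpen_setOf_lt_apply isOpen_ball c
  refine mem_interior_iff_mem_nhds.2 ?_
  filter_upwards [hopen.mem_nhds (mem_iInter₂.2 fun y _ ↦ hμ y)] with ν hν x
  obtain ⟨y, hyF, hxy⟩ := mem_iUnion₂.1 (hcover (mem_univ x))
  refine (mem_iInter₂.1 hν y hyF).trans_le (measure_mono (ball_subset_ball' ?_))
  linarith [mem_ball'.1 hxy]

lemma eventually_rpow_add_lt_mul_rpow_half {D ε p : ℝ} (hε : 0 < ε) (hp : 0 < p) :
    ∀ᶠ r in 𝓝[>] (0 : ℝ), r ^ (D + ε) < p * (r / 2) ^ D := by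
  have hlim : Tendsto (fun r : ℝ ↦ r ^ ε) (𝓝[>] 0) (𝓝 0) := by
    simpa [Real.zero_rpow hε.ne'] using
      ((Real.continuousAt_rpow_const 0 ε (.inr hε.le)).tendsto).mono_left nhdsWithin_le_nhds
  filter_upwards [hlim.eventually (gt_mem_nhds (by positivity : 0 < p / 2 ^ D)),
    self_mem_nhdsWithin] with r hr (hr0 : 0 < r)
  calc r ^ (D + ε) = r ^ D * r ^ ε := Real.rpow_add hr0 D ε
    _ < r ^ D * (p / 2 ^ D) := by gcongr
    _ = p * (r / 2) ^ D := by rw [Real.div_rpow hr0.le zero_le_two]; ring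

variable {D : ℝ} {ν : ProbabilityMeasure X}

lemma mix_mem_heavyBallMeasures
    (hν : ∀ x, ∀ r ∈ Ioc (0 : ℝ) 1, ENNReal.ofReal (r ^ D) ≤ (ν : Measure X) (ball x r))
    (μ : ProbabilityMeasure X) {p : I} (hp : 0 < p) : mix p μ ν ∈ heavyBallMeasures X D := by
  refine mem_iInter.2 fun n ↦ ?_
  have hn : (0 : ℝ) < 1 / (n + 1) := by positivity
  have hn1 : 1 / ((n : ℝ) + 1) ≤ 1 := div_le_one_of_le₀ (by simp) (by positivity)
  obtain ⟨r, ⟨hr0, hrn⟩, hr⟩ :=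
    ((eventually_mem_set.2 (Ioo_mem_nhdsGT hn)).and
      (eventually_rpow_add_lt_mul_rpow_half (D := D) hn hp)).exists
  refine mem_biUnion ⟨hr0, hrn⟩ (mem_interior_setOf_forall_lt_apply_ball hr0 fun x ↦ ?_)
  calc ENNReal.ofReal (r ^ (D + 1 / (n + 1))) < ENNReal.ofReal (p * (r / 2) ^ D) :=
        (ENNReal.ofReal_lt_ofReal_iff_of_nonneg (by positivity)).2 hr
    _ = toNNReal p * ENNReal.ofReal ((r / 2) ^ D) := by
        rw [ENNReal.ofReal_mul p.2.1, ← coe_toNNReal, ENNReal.ofReal_coe_nnreal]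
    _ ≤ toNNReal p * (ν : Measure X) (ball x (r / 2)) := by
        gcongr; exact hν x _ ⟨half_pos hr0, by linarith⟩
    _ ≤ (mix p μ ν : Measure X) (ball x (r / 2)) := mul_apply_le_mix_apply p μ ν _

lemma dense_heavyBallMeasures
    (hν : ∀ x, ∀ r ∈ Ioc (0 : ℝ) 1, ENNReal.ofReal (r ^ D) ≤ (ν : Measure X) (ball x r)) :
    Dense (heavyBallMeasures X D) := by
  intro μ
  have : (𝓝[>] (0 : I)).NeBot := nhdsGT_neBot_of_exists_gt ⟨1, zero_lt_one⟩
  refine mem_closure_of_tendsto (b := 𝓝[>] (0 : I)) ?_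
    (eventually_mem_nhdsWithin.mono fun p hp ↦ mix_mem_heavyBallMeasures hν μ hp)
  simpa using ((continuous_mix μ ν).continuousWithinAt (s := Ioi 0) (x := 0)).tendsto

end HeavyBalls

section Cube

attribute [local instance] Measure.Subtype.measureSpace

def cubeVolume (d : ℕ) : ProbabilityMeasure (Cube d) :=
  ⟨volume, ⟨by
    rw [Measure.Subtype.volume_univ measurableSet_Icc.nullMeasurableSet, Real.volume_Icc_pi]
    simp⟩⟩

lemma ofReal_rpow_le_cubeVolume_ball {d : ℕ} (x : Cube d) {r : ℝ} (hr : r ∈ Ioc 0 1) :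
    ENNReal.ofReal (r ^ (d : ℝ)) ≤ (cubeVolume d : Measure (Cube d)) (ball x r) := by
  set a : Fin d → ℝ := fun i ↦ min (x.1 i) (1 - r)
  set box : Set (Fin d → ℝ) := univ.pi fun i ↦ Ioo (a i) (a i + r)
  have ha : ∀ i, 0 ≤ a i ∧ a i + r ≤ 1 ∧ a i ≤ x.1 i ∧ x.1 i ≤ a i + r := by
    intro i
    have h0 : 0 ≤ x.1 i := x.2.1 i
    have h1 : x.1 i ≤ 1 := x.2.2 i
    rcases le_total (x.1 i) (1 - r) with h | h
    · simp only [a, min_eq_left h]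
      exact ⟨h0, by linarith, le_rfl, by linarith [hr.1]⟩
    · simp only [a, min_eq_right h]
      exact ⟨by linarith [hr.2], by linarith, h, by linarith⟩
  have hbox_cube : box ⊆ Icc 0 1 := fun y hy ↦
    ⟨fun i ↦ (ha i).1.trans (hy i trivial).1.le, fun i ↦ (hy i trivial).2.le.trans (ha i).2.1⟩
  have hbox_ball : ((↑) : Cube d → Fin d → ℝ) ⁻¹' box ⊆ ball x r := by
    intro y hy
    rw [mem_ball, Subtype.dist_eq, dist_pi_lt_iff hr.1]
    intro i
    rw [Real.dist_eq, abs_sub_lt_iff]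
    have := hy i trivial
    constructor <;> linarith [this.1, this.2, (ha i).2.2.1, (ha i).2.2.2]
  calc ENNReal.ofReal (r ^ (d : ℝ)) = volume box := by
        simp [box, Real.volume_pi_Ioo, ENNReal.ofReal_pow hr.1.le]
    _ = volume (((↑) : Cube d → Fin d → ℝ) ⁻¹' box) := by
        rw [volume_preimage_coe measurableSet_Icc.nullMeasurableSet
          (.univ_pi fun _ ↦ measurableSet_Ioo), inter_eq_left.2 hbox_cube]
    _ ≤ volume (ball x r) := measure_mono hbox_ball

end Cube

lemma log_div_log_le_of_ofReal_rpow_lt {m : ℝ≥0∞} {r a : ℝ} (hr0 : 0 < r) (hr1 : r < 1)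
    (hm : ENNReal.ofReal (r ^ a) < m) (hm_top : m ≠ ∞) :
    ENNReal.log m / (Real.log r : EReal) ≤ a := by
  have hlt : r ^ a < m.toReal := (ENNReal.ofReal_lt_iff_lt_toReal (by positivity) hm_top).1 hm
  have hpos : 0 < m.toReal := (by positivity : 0 < r ^ a).trans hlt
  rw [← ENNReal.ofReal_toReal hm_top, ENNReal.log_ofReal_of_pos hpos, ← EReal.coe_div,
    EReal.coe_le_coe_iff, div_le_iff_of_neg (Real.log_neg hr0 hr1), ← Real.log_rpow hr0]
  exact Real.log_le_log (by positivity) hlt.le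

lemma locDim_le_of_mem_heavyBallMeasures {d : ℕ} {D : ℝ} {μ : ProbabilityMeasure (Cube d)}
    (hμ : μ ∈ heavyBallMeasures (Cube d) D) (x : Cube d) :
    locDim (μ : Measure (Cube d)) x ≤ D := by
  refine EReal.le_of_forall_lt_iff_le.1 fun z hz ↦ liminf_le_of_frequently_le' ?_
  rw [(nhdsGT_basis 0).frequently_iff]
  intro ε hε
  obtain ⟨n, hn⟩ := exists_nat_one_div_lt (lt_min hε (sub_pos.2 (EReal.coe_lt_coe_iff.1 hz)))
  have hn1 : 1 / ((n : ℝ) + 1) ≤ 1 := div_le_one_of_le₀ (by simp) (by positivity)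
  obtain ⟨r, ⟨hr0, hrn⟩, hr⟩ := mem_iUnion₂.1 (mem_iInter.1 hμ n)
  refine ⟨r, ⟨hr0, hrn.trans (hn.trans_le (min_le_left _ _))⟩, ?_⟩
  calc _ ≤ ((D + 1 / (n + 1) : ℝ) : EReal) :=
        log_div_log_le_of_ofReal_rpow_lt hr0 (hrn.trans_le hn1) (interior_subset hr x)
          (measure_ne_top _ _)
    _ ≤ z := EReal.coe_le_coe_iff.2 (by linarith [min_le_right ε (z - D)])

theorem typical_measures_locDim_le_d_general (d : ℕ) :
    ∃ R : Set (ProbabilityMeasure (Cube d)), IsGδ R ∧ Dense R ∧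
      ∀ μ ∈ R,
        (∀ x : Cube d, locDim (μ : Measure (Cube d)) x ≤ ((d : ℝ) : EReal)) ∧
        (∀ h : ℝ, (d : ℝ) < h → levelSet (μ : Measure (Cube d)) h = ∅) := by
  refine ⟨heavyBallMeasures (Cube d) d, isGδ_heavyBallMeasures _ _,
    dense_heavyBallMeasures ofReal_rpow_le_cubeVolume_ball,
    fun μ hμ ↦ ⟨locDim_le_of_mem_heavyBallMeasures hμ, fun h hdh ↦ ?_⟩⟩
  refine eq_empty_of_forall_notMem fun x (hx : locDim _ x = h) ↦ ?_
  have := locDim_le_of_mem_heavyBallMeasures hμ x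
  rw [hx, EReal.coe_le_coe_iff] at this
  linarith

/-- There is a dense `Gδ` set `R` of probability measures on `[0,1]^d`
(with the weak topology) such that every `μ ∈ R` has all its local dimensions `≤ d`;
equivalently, `E_μ(h) = ∅` for every `h > d`. -/
theorem typical_measures_locDim_le_d (d : ℕ) (hd : 1 ≤ d) :
    ∃ R : Set (ProbabilityMeasure (Cube d)), IsGδ R ∧ Dense R ∧
      ∀ μ ∈ R,
        (∀ x : Cube d, locDim (μ : Measure (Cube d)) x ≤ ((d : ℝ) : EReal)) ∧
        (∀ h : ℝ, (d : ℝ) < h → levelSet (μ : Measure (Cube d)) h = ∅) :=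
  typical_measures_locDim_le_d_general d
end
end

section
/- For every Borel probability measure μ on [0,1]^d and every h ≥ 0, the set Ẽ_μ(h) = { x ∈ [0,1]^d : h_μ(x) ≤ h } satisfies dim_H Ẽ_μ(h) ≤ min(h,d); in particular dim_H E_μ(h) ≤ min(h,d). -/
open MeasureTheory Metric Filter Set
open scoped ENNReal NNReal Topology

noncomputable section

/-!
If `h_μ(x) ≤ h < s`, then balls `B(x, r)` of arbitrarily small radius have mass at least `r^s`.
The Vitali covering lemma extracts from these balls a disjoint (hence countable) family whose
fivefold enlargements cover the set, and summing gives `H^s(Ẽ_μ(h)) ≤ 10^s μ([0,1]^d) < ∞`,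
so `dim_H Ẽ_μ(h) ≤ s`. The bound by `d` holds because the cube sits isometrically in `ℝ^d`.
-/

theorem ofReal_rpow_le_of_log_div_log_lt {m : ℝ≥0∞} (hm : m ≠ ⊤) {r s : ℝ} (hr₀ : 0 < r)
    (hr₁ : r < 1) (h : ENNReal.log m / Real.log r < s) : ENNReal.ofReal (r ^ s) ≤ m := by
  have hlog : Real.log r < 0 := Real.log_neg hr₀ hr₁
  rcases eq_or_ne m 0 with rfl | hm₀
  · rw [ENNReal.log_zero, EReal.bot_div_of_neg_ne_bot (mod_cast hlog) (EReal.coe_ne_bot _)] at h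
    exact absurd h not_top_lt
  rw [ENNReal.log_pos_real hm₀ hm, ← EReal.coe_div, EReal.coe_lt_coe_iff,
    div_lt_iff_of_neg hlog, ← Real.log_rpow hr₀,
    Real.log_lt_log_iff (Real.rpow_pos_of_pos hr₀ s) (ENNReal.toReal_pos hm₀ hm)] at h
  exact ENNReal.ofReal_le_of_le_toReal h.le

theorem frequently_ofReal_rpow_le_measure_ball {X : Type*} [PseudoMetricSpace X]
    [MeasurableSpace X] (μ : Measure X) [IsFiniteMeasure μ] {x : X} {s : ℝ}
    (hx : Filter.liminf (fun r : ℝ => ENNReal.log (μ (ball x r)) / (Real.log r : EReal))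
      (𝓝[>] 0) < s) :
    ∃ᶠ r in 𝓝[>] 0, ENNReal.ofReal (r ^ s) ≤ μ (ball x r) := by
  have hsmall : ∀ᶠ r in 𝓝[>] (0 : ℝ), r ∈ Ioo 0 1 := Ioo_mem_nhdsGT one_pos
  refine ((frequently_lt_of_liminf_lt (by isBoundedDefault) hx).and_eventually hsmall).mono ?_
  rintro r ⟨hr, hr₀, hr₁⟩
  exact ofReal_rpow_le_of_log_div_log_lt (measure_ne_top μ _) hr₀ hr₁ hr

section MassDistribution

variable {X : Type*} [PseudoMetricSpace X] [MeasurableSpace X] [OpensMeasurableSpace X]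
  (μ : Measure X) [IsFiniteMeasure μ]

theorem exists_countable_disjoint_closedBall_cover {E : Set X} {s δ : ℝ} (hδ : 0 < δ)
    (hE : ∀ x ∈ E, ∃ᶠ r in 𝓝[>] 0, ENNReal.ofReal (r ^ s) ≤ μ (ball x r)) :
    ∃ u : Set (X × ℝ), u.Countable ∧ u.PairwiseDisjoint (fun p => closedBall p.1 p.2) ∧
      (∀ p ∈ u, 0 < p.2 ∧ p.2 ≤ δ ∧ ENNReal.ofReal (p.2 ^ s) ≤ μ (closedBall p.1 p.2)) ∧
      E ⊆ ⋃ p ∈ u, closedBall p.1 (5 * p.2) := by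
  set t : Set (X × ℝ) :=
    {p | 0 < p.2 ∧ p.2 ≤ δ ∧ ENNReal.ofReal (p.2 ^ s) ≤ μ (closedBall p.1 p.2)}
  obtain ⟨u, hut, hdisj, hcover⟩ :=
    Vitali.exists_disjoint_subfamily_covering_enlargement_closedBall t Prod.fst Prod.snd δ
      (fun p hp => hp.2.1) 5 (by norm_num)
  have hpos : ∀ p ∈ u, 0 < μ (closedBall p.1 p.2) := fun p hp =>
    (ENNReal.ofReal_pos.2 (Real.rpow_pos_of_pos (hut hp).1 s)).trans_le (hut hp).2.2
  have hcount : u.Countable := by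
    have := Measure.countable_meas_pos_of_disjoint_iUnion (μ := μ)
      (fun _ => measurableSet_closedBall) (hdisj.subtype _ _)
    exact countable_coe_iff.1 (countable_univ_iff.1 (this.mono fun p _ => hpos p p.2))
  refine ⟨u, hcount, hdisj, fun p hp => hut hp, fun x hx => ?_⟩
  obtain ⟨r, hr, hr₀, hrδ⟩ := ((hE x hx).and_eventually (Ioo_mem_nhdsGT hδ)).exists
  obtain ⟨p, hpu, hsub⟩ := hcover (x, r)
    ⟨hr₀, hrδ.le, hr.trans (measure_mono ball_subset_closedBall)⟩
  exact mem_biUnion hpu (hsub (mem_closedBall_self hr₀.le))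

end MassDistribution

section HausdorffBound

variable {X : Type*} [MetricSpace X] [MeasurableSpace X] [BorelSpace X]
  (μ : Measure X) [IsFiniteMeasure μ] {E : Set X} {s : ℝ}

theorem hausdorffMeasure_le_of_frequently_ofReal_rpow_le_measure_ball (hs : 0 < s)
    (hE : ∀ x ∈ E, ∃ᶠ r in 𝓝[>] 0, ENNReal.ofReal (r ^ s) ≤ μ (ball x r)) :
    μH[s] E ≤ ENNReal.ofReal (10 ^ s) * μ univ := by
  choose u hcount hdisj hball hcover using fun n : ℕ =>
    exists_countable_disjoint_closedBall_cover μ (Nat.one_div_pos_of_nat (n := n)) hE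
  have := fun n => (hcount n).to_subtype
  have hdiam (c : X) (r : ℝ) : ediam (closedBall c (5 * r)) ≤ ENNReal.ofReal (10 * r) :=
    ediam_le_of_forall_dist_le fun y hy z hz => by
      linarith [dist_triangle_right y z c, mem_closedBall.1 hy, mem_closedBall.1 hz]
  have hsum : ∀ n, ∑' p : u n, ediam (closedBall p.1.1 (5 * p.1.2)) ^ s ≤
      ENNReal.ofReal (10 ^ s) * μ univ := fun n => calc
    _ ≤ ∑' p : u n, ENNReal.ofReal (10 ^ s) * μ (closedBall p.1.1 p.1.2) := by
        refine ENNReal.tsum_le_tsum fun p => ?_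
        obtain ⟨hr₀, -, hμ⟩ := hball n p p.2
        calc ediam (closedBall p.1.1 (5 * p.1.2)) ^ s
            ≤ ENNReal.ofReal (10 * p.1.2) ^ s := ENNReal.rpow_le_rpow (hdiam _ _) hs.le
          _ = ENNReal.ofReal (10 ^ s) * ENNReal.ofReal (p.1.2 ^ s) := by
            rw [ENNReal.ofReal_rpow_of_pos (by positivity), Real.mul_rpow (by norm_num) hr₀.le,
              ENNReal.ofReal_mul (by positivity)]
          _ ≤ ENNReal.ofReal (10 ^ s) * μ (closedBall p.1.1 p.1.2) := by gcongr
    _ ≤ ENNReal.ofReal (10 ^ s) * μ univ := by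
        rw [ENNReal.tsum_mul_left]
        gcongr
        exact tsum_measure_le_measure_univ (fun _ => measurableSet_closedBall.nullMeasurableSet)
          fun p q hpq => (hdisj n p.2 q.2 (Subtype.coe_ne_coe.2 hpq)).aedisjoint
  have hscale : Tendsto (fun n : ℕ => ENNReal.ofReal (10 * (1 / ((n : ℝ) + 1)))) atTop (𝓝 0) := by
    simpa using ENNReal.tendsto_ofReal (tendsto_one_div_add_atTop_nhds_zero_nat.const_mul 10)
  calc μH[s] E
      ≤ liminf (fun n => ∑' p : u n, ediam (closedBall p.1.1 (5 * p.1.2)) ^ s) atTop :=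
        Measure.hausdorffMeasure_le_liminf_tsum s E _ hscale _
          (Eventually.of_forall fun n p =>
            (hdiam _ _).trans (by gcongr; exact (hball n p p.2).2.1))
          (Eventually.of_forall fun n => by simpa only [iUnion_subtype] using hcover n)
    _ ≤ ENNReal.ofReal (10 ^ s) * μ univ := liminf_le_of_frequently_le' (Frequently.of_forall hsum)

theorem dimH_le_of_frequently_ofReal_rpow_le_measure_ball (hs : 0 < s)
    (hE : ∀ x ∈ E, ∃ᶠ r in 𝓝[>] 0, ENNReal.ofReal (r ^ s) ≤ μ (ball x r)) :
    dimH E ≤ ENNReal.ofReal s := by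
  have hfin : μH[s] E ≠ ∞ := ne_top_of_le_ne_top
    (ENNReal.mul_ne_top ENNReal.ofReal_ne_top (measure_ne_top μ univ))
    (hausdorffMeasure_le_of_frequently_ofReal_rpow_le_measure_ball μ hs hE)
  rw [← Real.coe_toNNReal _ hs.le] at hfin
  exact dimH_le_of_hausdorffMeasure_ne_top hfin

end HausdorffBound

theorem dimH_setOf_locDim_le {d : ℕ} (μ : Measure (Cube d)) [IsFiniteMeasure μ] {h : ℝ}
    (hh : 0 ≤ h) : dimH {x : Cube d | locDim μ x ≤ h} ≤ ENNReal.ofReal h := by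
  refine ENNReal.le_of_forall_pos_le_add fun ε hε _ => ?_
  have hlt : h < h + ε := lt_add_of_pos_right h hε
  calc dimH {x : Cube d | locDim μ x ≤ h}
      ≤ ENNReal.ofReal (h + ε) :=
        dimH_le_of_frequently_ofReal_rpow_le_measure_ball μ (hh.trans_lt hlt) fun x hx =>
          frequently_ofReal_rpow_le_measure_ball μ (hx.trans_lt (EReal.coe_lt_coe_iff.2 hlt))
    _ = ENNReal.ofReal h + ε := by
        rw [ENNReal.ofReal_add hh ε.coe_nonneg, ENNReal.ofReal_coe_nnreal]

theorem dimH_cube_le {d : ℕ} (E : Set (Cube d)) : dimH E ≤ d := by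
  rw [← isometry_subtype_coe.dimH_image E, ← Real.dimH_univ_pi_fin d]
  exact dimH_mono (subset_univ _)

theorem dimH_levelSet_le_general (d : ℕ) (μ : Measure (Cube d)) [IsProbabilityMeasure μ]
    (h : ℝ) (hh : 0 ≤ h) :
    dimH {x : Cube d | locDim μ x ≤ (h : EReal)} ≤ ENNReal.ofReal (min h d) ∧
    dimH (levelSet μ h) ≤ ENNReal.ofReal (min h d) := by
  have hsublevel : dimH {x : Cube d | locDim μ x ≤ (h : EReal)} ≤ ENNReal.ofReal (min h d) := by
    rw [(ENNReal.ofReal_mono.map_min : ENNReal.ofReal (min h d) = _), ENNReal.ofReal_natCast]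
    exact le_min (dimH_setOf_locDim_le μ hh) (dimH_cube_le _)
  exact ⟨hsublevel, (dimH_mono fun _ hx => le_of_eq hx).trans hsublevel⟩

/-- For every Borel probability measure `μ` on `[0,1]^d` and every `h ≥ 0`,
the set `Ẽ_μ(h) = {x : h_μ(x) ≤ h}` has Hausdorff dimension at most `min(h,d)`; in particular
so does `E_μ(h)`. -/
theorem dimH_levelSet_le (d : ℕ) (hd : 1 ≤ d) (μ : Measure (Cube d)) [IsProbabilityMeasure μ]
    (h : ℝ) (hh : 0 ≤ h) :
    dimH {x : Cube d | locDim μ x ≤ (h : EReal)} ≤ ENNReal.ofReal (min h d) ∧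
    dimH (levelSet μ h) ≤ ENNReal.ofReal (min h d) :=
  dimH_levelSet_le_general d μ h hh
end
end

section
/- Let θ ≥ 1 and let (j_p)_{p≥1} be a strictly increasing sequence of positive integers. Then dim_H A_θ = d/θ. -/
open MeasureTheory Metric Filter Set
open scoped ENNReal NNReal Topology

noncomputable section

/-- The union over `k ∈ Z_j` of the closed balls of radius `2^{-θ j}` centered at the
dyadic centers `(k + e) 2^{-j}`, in the supremum metric of `ℝ^d`. -/
def dyadicBallUnion (d : ℕ) (θ : ℝ) (j : ℕ) : Set (Fin d → ℝ) :=
  ⋃ k : Fin d → Fin (2 ^ j),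
    Metric.closedBall (fun i => ((k i : ℝ) + 1 / 2) / 2 ^ j) ((2 : ℝ) ^ (-(θ * (j : ℝ))))

/-- The set `A_θ` of points of `[0,1]^d` belonging to infinitely many of the sets
`∪_{k ∈ Z_{j_p}} B̄((k+e)2^{-j_p}, 2^{-θ j_p})`. -/
def atheta (d : ℕ) (θ : ℝ) (j : ℕ → ℕ) : Set (Fin d → ℝ) :=
  Set.Icc 0 1 ∩ {x | ∀ P : ℕ, ∃ p, P ≤ p ∧ x ∈ dyadicBallUnion d θ (j p)}

/-! Upper bound: for `s > d/θ` and every `P`, the `2^{d j_p}` balls of radius `2^{-θ j_p}`,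
`p ≥ P`, cover `A_θ`, and `∑_p 2^{d j_p} 2^{-s θ j_p} < ∞`; hence `μH[s] A_θ = 0`.

Lower bound: for `0 < α < 1/θ`, choose a sparse subsequence `J_m = j_{p_m}` and reserve the binary
places `[J_m, T_m)`, `T_m = ⌊θ J_m⌋ + 1`, for the pattern `10…0`: this puts a number within
`2^{-θ J_m}` of a centre `(k + 1/2) 2^{-J_m}`. The remaining free places carry the binary digits
of an arbitrary `y ∈ [0,1)`. Sparsity makes the free places at least an `α`-fraction of every
initial segment ending at a free place, which makes `y` an `α`-Hölder function of its image. Doing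
this in each coordinate embeds `[0,1)^d` into `A_θ` with an `α`-Hölder inverse, so
`dim_H A_θ ≥ α d`. -/

theorem hausdorffMeasure_limsup_eq_zero {X : Type*} [EMetricSpace X] [MeasurableSpace X]
    [BorelSpace X] {ι : ℕ → Type*} [∀ n, Countable (ι n)] (U : ∀ n, ι n → Set X) {s : ℝ}
    (hs : 0 < s) (hU : ∑' n, ∑' i, ediam (U n i) ^ s ≠ ∞) :
    μH[s] (limsup (fun n => ⋃ i, U n i) atTop) = 0 := by
  set tail : ℕ → ℝ≥0∞ := fun P => ∑' n, ∑' i, ediam (U (n + P) i) ^ s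
  have htail : Tendsto tail atTop (𝓝 0) := ENNReal.tendsto_sum_nat_add _ hU
  have hdiam : ∀ P (k : Σ n, ι (n + P)), ediam (U (k.1 + P) k.2) ≤ tail P ^ s⁻¹ := by
    rintro P ⟨n, i⟩
    calc ediam (U (n + P) i) = (ediam (U (n + P) i) ^ s) ^ s⁻¹ :=
          (ENNReal.rpow_rpow_inv hs.ne' _).symm
      _ ≤ tail P ^ s⁻¹ := by
          gcongr
          exact (ENNReal.le_tsum (f := fun i => ediam (U (n + P) i) ^ s) i).trans
            (ENNReal.le_tsum (f := fun n => ∑' i, ediam (U (n + P) i) ^ s) n)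
  have hcover :
      ∀ P, limsup (fun n => ⋃ i, U n i) atTop ⊆ ⋃ k : Σ n, ι (n + P), U (k.1 + P) k.2 := by
    intro P x hx
    obtain ⟨n, hPn, hxn⟩ := frequently_atTop.1 (mem_limsup_iff_frequently_mem.1 hx) P
    obtain ⟨i, hi⟩ := mem_iUnion.1 hxn
    obtain ⟨m, rfl⟩ := Nat.exists_eq_add_of_le' hPn
    exact mem_iUnion.2 ⟨⟨m, i⟩, hi⟩
  have hr : Tendsto (fun P => tail P ^ s⁻¹) atTop (𝓝 0) := by
    have := ((ENNReal.continuous_rpow_const (y := s⁻¹)).tendsto 0).comp htail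
    rwa [ENNReal.zero_rpow_of_pos (inv_pos.2 hs)] at this
  refine le_antisymm ?_ zero_le
  calc μH[s] (limsup (fun n => ⋃ i, U n i) atTop)
      ≤ liminf (fun P => ∑' k : Σ n, ι (n + P), ediam (U (k.1 + P) k.2) ^ s) atTop :=
        Measure.hausdorffMeasure_le_liminf_tsum s _ _ hr _ (Eventually.of_forall hdiam)
          (Eventually.of_forall hcover)
    _ = 0 := by simpa only [ENNReal.tsum_sigma'] using htail.liminf_eq

theorem ediam_closedBall_rpow_le {X : Type*} [PseudoMetricSpace X] (x : X) {r s : ℝ}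
    (hr : 0 ≤ r) (hs : 0 ≤ s) : ediam (closedBall x r) ^ s ≤ ENNReal.ofReal ((2 * r) ^ s) := by
  rw [← ENNReal.ofReal_rpow_of_nonneg (by positivity) hs]
  gcongr
  rw [← closedEBall_ofReal hr, ENNReal.ofReal_mul zero_le_two, ENNReal.ofReal_ofNat]
  exact ediam_closedEBall_le

theorem hausdorffMeasure_limsup_iUnion_closedBall_eq_zero {X : Type*} [MetricSpace X]
    [MeasurableSpace X] [BorelSpace X] {ι : ℕ → Type*} [∀ n, Fintype (ι n)]
    (c : ∀ n, ι n → X) {r : ℕ → ℝ} (hr : ∀ n, 0 ≤ r n) {s : ℝ} (hs : 0 < s)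
    (hsum : Summable fun n => Fintype.card (ι n) * (2 * r n) ^ s) :
    μH[s] (limsup (fun n => ⋃ i, closedBall (c n i) (r n)) atTop) = 0 := by
  refine hausdorffMeasure_limsup_eq_zero _ hs (ne_top_of_le_ne_top
    (ENNReal.ofReal_ne_top (r := ∑' n, Fintype.card (ι n) * (2 * r n) ^ s)) ?_)
  rw [ENNReal.ofReal_tsum_of_nonneg (fun n => by have := hr n; positivity) hsum]
  refine ENNReal.tsum_le_tsum fun n => ?_
  calc ∑' i, ediam (closedBall (c n i) (r n)) ^ s
      ≤ ∑' _ : ι n, ENNReal.ofReal ((2 * r n) ^ s) :=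
        ENNReal.tsum_le_tsum fun i => ediam_closedBall_rpow_le _ (hr n) hs.le
    _ = _ := by
        rw [tsum_fintype, Finset.sum_const, Finset.card_univ, nsmul_eq_mul,
          ENNReal.ofReal_mul (Nat.cast_nonneg _), ENNReal.ofReal_natCast]

theorem dimH_le_dimH_image_div_of_dist_le {X Y : Type*} [MetricSpace X] [MetricSpace Y]
    {f : X → Y} {s : Set X} {C r : ℝ≥0} (hr : 0 < r)
    (h : ∀ x ∈ s, ∀ y ∈ s, dist x y ≤ C * dist (f x) (f y) ^ (r : ℝ)) :
    dimH s ≤ dimH (f '' s) / r := by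
  rcases s.eq_empty_or_nonempty with rfl | ⟨x₀, -⟩
  · simp
  have : Nonempty X := ⟨x₀⟩
  have hinj : InjOn f s := fun x hx y hy hxy => by
    simpa [hxy, Real.zero_rpow (NNReal.coe_ne_zero.2 hr.ne')] using h x hx y hy
  have hg : HolderOnWith C r (Function.invFunOn f s) (f '' s) := by
    rintro _ ⟨x, hx, rfl⟩ _ ⟨y, hy, rfl⟩
    rw [hinj.leftInvOn_invFunOn hx, hinj.leftInvOn_invFunOn hy, edist_dist, edist_dist]
    calc ENNReal.ofReal (dist x y) ≤ ENNReal.ofReal (C * dist (f x) (f y) ^ (r : ℝ)) :=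
          ENNReal.ofReal_le_ofReal (h x hx y hy)
      _ = C * ENNReal.ofReal (dist (f x) (f y)) ^ (r : ℝ) := by
          rw [ENNReal.ofReal_mul C.coe_nonneg,
            ENNReal.ofReal_rpow_of_nonneg dist_nonneg r.coe_nonneg, ENNReal.ofReal_coe_nnreal]
  simpa [hinj.invFunOn_image Subset.rfl] using hg.dimH_image_le hr

lemma exists_nat_lt_eq_pow_mul_sum_ofDigitsTerm {b : ℕ} (a : ℕ → Fin b) (n : ℕ) :
    ∃ k < b ^ n, (b : ℝ) ^ n * ∑ i ∈ Finset.range n, Real.ofDigitsTerm a i = k := by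
  induction n with
  | zero => exact ⟨0, by simp, by simp⟩
  | succ n ih =>
    obtain ⟨k, hk, hsum⟩ := ih
    have hb : (b : ℝ) ≠ 0 := Nat.cast_ne_zero.2 (Fin.pos (a 0)).ne'
    refine ⟨b * k + a n, ?_, ?_⟩
    · calc b * k + a n < b * (k + 1) := by
            rw [mul_add, mul_one]; exact Nat.add_lt_add_left (a n).2 _
        _ ≤ b * b ^ n := Nat.mul_le_mul_left _ hk
        _ = b ^ (n + 1) := (pow_succ' _ _).symm
    · rw [Finset.sum_range_succ, mul_add, pow_succ', mul_assoc, hsum, Real.ofDigitsTerm,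
        ← pow_succ', mul_left_comm, mul_inv_cancel₀ (pow_ne_zero _ hb)]
      push_cast; ring

lemma exists_abs_ofDigits_sub_le {a : ℕ → Fin 2} {J T : ℕ} (hJT : J < T) (haJ : a J = 1)
    (ha : ∀ n, J < n → n < T → a n = 0) :
    ∃ k : Fin (2 ^ J), |Real.ofDigits a - ((k : ℝ) + 1 / 2) / 2 ^ J| ≤ (2 ^ T)⁻¹ := by
  obtain ⟨k, hk, hsum⟩ := exists_nat_lt_eq_pow_mul_sum_ofDigitsTerm a J
  refine ⟨⟨k, hk⟩, ?_⟩
  have hblock : ∑ i ∈ Finset.range (T - J), Real.ofDigitsTerm (fun i => a (i + J)) i = 2⁻¹ := by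
    rw [Finset.sum_eq_single_of_mem 0 (Finset.mem_range.2 (by omega)) fun i hi hi0 => by
      simp [Real.ofDigitsTerm, ha (i + J) (by omega) (by have := Finset.mem_range.1 hi; omega)]]
    simp [Real.ofDigitsTerm, haJ]
  set R := Real.ofDigits fun i => a (i + (T - J) + J)
  have hR : R ∈ Icc (0 : ℝ) 1 := ⟨Real.ofDigits_nonneg _, Real.ofDigits_le_one _⟩
  have hT : ((2 : ℝ) ^ J)⁻¹ * (2 ^ (T - J))⁻¹ = (2 ^ T)⁻¹ := by
    rw [← mul_inv, ← pow_add, Nat.add_sub_cancel' hJT.le]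
  rw [Real.ofDigits_eq_sum_add_ofDigits a J, Real.ofDigits_eq_sum_add_ofDigits _ (T - J), hblock]
  simp only [Nat.cast_ofNat] at hsum ⊢
  have hprefix : ∑ i ∈ Finset.range J, Real.ofDigitsTerm a i = k * ((2 : ℝ) ^ J)⁻¹ := by
    rw [← hsum, mul_comm, inv_mul_cancel_left₀ (by positivity)]
  rw [hprefix, ← hT, show (k : ℝ) * (2 ^ J)⁻¹ + (2 ^ J)⁻¹ * (2⁻¹ + (2 ^ (T - J))⁻¹ * R)
      - (k + 1 / 2) / 2 ^ J = (2 ^ J)⁻¹ * (2 ^ (T - J))⁻¹ * R by ring,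
    abs_of_nonneg (mul_nonneg (by positivity) hR.1)]
  exact mul_le_of_le_one_right (by positivity) hR.2

lemma inv_two_pow_le_four_mul_rpow {α : ℝ} {K n : ℕ} (hα : α ≤ 1) (h : α * n ≤ K) :
    ((2 : ℝ) ^ K)⁻¹ ≤ 4 * ((2 ^ (n + 2))⁻¹ : ℝ) ^ α := by
  have h4 : (4 : ℝ) = 2 ^ (2 : ℝ) := by norm_num
  rw [← Real.rpow_natCast, ← Real.rpow_natCast, ← Real.rpow_neg zero_le_two,
    Real.inv_rpow (by positivity), ← Real.rpow_neg (by positivity), ← Real.rpow_mul zero_le_two,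
    h4, ← Real.rpow_add zero_lt_two]
  gcongr
  · norm_num
  · push_cast; nlinarith

noncomputable def spreadDiff (σ : ℕ → ℕ) (a a' : ℕ → Fin 2) : ℝ :=
  ∑' t, ((a t : ℝ) - a' t) / 2 ^ (σ t + 1)

section spreadDiff

variable {σ : ℕ → ℕ} {a a' : ℕ → Fin 2}

lemma abs_digit_sub_le (x y : Fin 2) : |(x : ℝ) - y| ≤ 1 := by
  fin_cases x <;> fin_cases y <;> norm_num

lemma abs_spreadDiff_term_le (hσ : StrictMono σ) (t : ℕ) :
    |((a t : ℝ) - a' t) / 2 ^ (σ t + 1)| ≤ (2 ^ σ 0)⁻¹ / 2 / 2 ^ t := by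
  rw [abs_div, abs_of_pos (by positivity : (0 : ℝ) < 2 ^ (σ t + 1)), div_le_iff₀ (by positivity)]
  calc |(a t : ℝ) - a' t| ≤ 1 := abs_digit_sub_le _ _
    _ ≤ (2 ^ σ 0)⁻¹ / 2 / 2 ^ t * 2 ^ (σ t + 1) := by
      have h2 : (2 ^ σ 0)⁻¹ / 2 / 2 ^ t = ((2 : ℝ) ^ (σ 0 + t + 1))⁻¹ := by
        rw [pow_succ, pow_add]; field_simp
      have := hσ.add_le_nat t 0
      rw [add_zero] at this
      rw [h2, inv_mul_eq_div, one_le_div (by positivity)]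
      gcongr <;> [norm_num; omega]

lemma summable_spreadDiff (hσ : StrictMono σ) :
    Summable fun t => ((a t : ℝ) - a' t) / 2 ^ (σ t + 1) :=
  Summable.of_norm_bounded (summable_geometric_two' _) (abs_spreadDiff_term_le hσ)

lemma abs_spreadDiff_le (hσ : StrictMono σ) : |spreadDiff σ a a'| ≤ (2 ^ σ 0)⁻¹ := by
  calc |spreadDiff σ a a'| ≤ ∑' t, (2 ^ σ 0)⁻¹ / 2 / (2 : ℝ) ^ t :=
        (norm_tsum_le_tsum_norm (summable_spreadDiff hσ).norm).trans
          ((summable_spreadDiff hσ).norm.tsum_le_tsum (abs_spreadDiff_term_le hσ)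
            (summable_geometric_two' _))
    _ = (2 ^ σ 0)⁻¹ := tsum_geometric_two' _

lemma spreadDiff_eq_sum_add (hσ : StrictMono σ) (n : ℕ) :
    spreadDiff σ a a' = ∑ t ∈ Finset.range n, ((a t : ℝ) - a' t) / 2 ^ (σ t + 1)
      + spreadDiff (fun t => σ (t + n)) (fun t => a (t + n)) (fun t => a' (t + n)) :=
  ((summable_spreadDiff hσ).sum_add_tsum_nat_add n).symm

lemma spreadDiff_swap : spreadDiff σ a' a = -spreadDiff σ a a' := by
  rw [spreadDiff, spreadDiff, ← tsum_neg]
  congr 1; ext t; ring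

lemma neg_le_spreadDiff (hσ : StrictMono σ) (h : a' 0 ≤ a 0) :
    -(2 ^ (σ 0 + 1))⁻¹ ≤ spreadDiff σ a a' := by
  have htail := neg_le_of_abs_le (abs_spreadDiff_le (hσ.comp (strictMono_id.add_const 1))
    (a := fun t => a (t + 1)) (a' := fun t => a' (t + 1)))
  have h0 : (0 : ℝ) ≤ ((a 0 : ℝ) - a' 0) / 2 ^ (σ 0 + 1) := by
    have : ((a' 0 : ℕ) : ℝ) ≤ (a 0 : ℕ) := by exact_mod_cast h
    exact div_nonneg (by simpa using this) (by positivity)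
  have hmono : ((2 : ℝ) ^ σ 1)⁻¹ ≤ (2 ^ (σ 0 + 1))⁻¹ := by
    gcongr
    · norm_num
    · exact hσ zero_lt_one
  rw [spreadDiff_eq_sum_add hσ 1, Finset.sum_range_one]
  simp only [Function.comp_def, id, zero_add] at htail
  linarith

lemma ofDigits_sub_ofDigits (a a' : ℕ → Fin 2) :
    Real.ofDigits a - Real.ofDigits a' = spreadDiff id a a' := by
  rw [Real.ofDigits, Real.ofDigits,
    ← Real.summable_ofDigitsTerm.tsum_sub Real.summable_ofDigitsTerm]
  congr 1; ext t
  simp [Real.ofDigitsTerm, div_eq_mul_inv, sub_mul]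

/-- Up to place `K` the expansions read `0.x10…0` and `0.x01…1`: the only way two binary
expansions with an early first difference can be close. -/
structure BinaryBorrow (a a' : ℕ → Fin 2) (N K : ℕ) : Prop where
  le : N ≤ K
  eq_of_lt : ∀ t < N, a t = a' t
  left_eq_one : a N = 1
  right_eq_zero : a' N = 0
  borrow : ∀ t, N < t → t ≤ K → a t = 0 ∧ a' t = 1

namespace BinaryBorrow

variable {N K : ℕ}

lemma of_succ (h : BinaryBorrow a a' N (K + 1)) (hK : N ≤ K) : BinaryBorrow a a' N K :=
  ⟨hK, h.eq_of_lt, h.left_eq_one, h.right_eq_zero, fun t h1 h2 => h.borrow t h1 (by omega)⟩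

lemma sum_range_succ_left (h : BinaryBorrow a a' N K) (σ : ℕ → ℕ) :
    ∑ t ∈ Finset.range (N + 1), ((a t : ℝ) - a' t) / 2 ^ (σ t + 1) = (2 ^ (σ N + 1))⁻¹ := by
  rw [Finset.sum_range_succ, Finset.sum_eq_zero fun t ht => by
    rw [h.eq_of_lt t (Finset.mem_range.1 ht), sub_self, zero_div]]
  simp [h.left_eq_one, h.right_eq_zero]

lemma inv_two_pow_le_sum (hσ : StrictMono σ) (h : BinaryBorrow a a' N K) :
    (2 ^ (σ K + 1))⁻¹ ≤ ∑ t ∈ Finset.range (K + 1), ((a t : ℝ) - a' t) / 2 ^ (σ t + 1) := by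
  induction K, h.le using Nat.le_induction with
  | base => exact (h.sum_range_succ_left σ).ge
  | succ K hK ih =>
    rw [Finset.sum_range_succ, (h.borrow (K + 1) (by omega) le_rfl).1,
      (h.borrow (K + 1) (by omega) le_rfl).2]
    have hK := ih (h.of_succ hK)
    have hhalf : 2 * ((2 : ℝ) ^ (σ (K + 1) + 1))⁻¹ ≤ (2 ^ (σ K + 1))⁻¹ := by
      rw [pow_succ, mul_inv, mul_left_comm, mul_inv_cancel₀ two_ne_zero, mul_one]
      gcongr
      · norm_num
      · exact hσ (Nat.lt_succ_self K)
    norm_num [neg_div]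
    linarith

lemma sum_range_eq (h : BinaryBorrow a a' N K) :
    ∑ t ∈ Finset.range (K + 1), ((a t : ℝ) - a' t) / 2 ^ (t + 1) = (2 ^ (K + 1))⁻¹ := by
  induction K, h.le using Nat.le_induction with
  | base => exact h.sum_range_succ_left id
  | succ K hK ih =>
    rw [Finset.sum_range_succ, (h.borrow (K + 1) (by omega) le_rfl).1,
      (h.borrow (K + 1) (by omega) le_rfl).2, ih (h.of_succ hK)]
    norm_num
    ring

lemma abs_ofDigits_sub_le (h : BinaryBorrow a a' N K) :
    |Real.ofDigits a - Real.ofDigits a'| ≤ (2 ^ K)⁻¹ := by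
  have htail := abs_spreadDiff_le (strictMono_id.add_const (K + 1))
    (a := fun t => a (t + (K + 1))) (a' := fun t => a' (t + (K + 1)))
  rw [ofDigits_sub_ofDigits, spreadDiff_eq_sum_add strictMono_id (K + 1)]
  refine (abs_add_le _ _).trans ?_
  simp only [id, h.sum_range_eq, zero_add] at htail ⊢
  rw [abs_of_pos (by positivity)]
  calc ((2 : ℝ) ^ (K + 1))⁻¹ + _ ≤ (2 ^ (K + 1))⁻¹ + (2 ^ (K + 1))⁻¹ := by gcongr
    _ = (2 ^ K)⁻¹ := by rw [pow_succ]; ring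

lemma inv_two_pow_le_spreadDiff (hσ : StrictMono σ) (h : BinaryBorrow a a' N K)
    (hK : a' (K + 1) ≤ a (K + 1)) : (2 ^ (σ K + 2))⁻¹ ≤ spreadDiff σ a a' := by
  have htail := neg_le_spreadDiff (hσ.comp (strictMono_id.add_const (K + 1)))
    (a := fun t => a (t + (K + 1))) (a' := fun t => a' (t + (K + 1))) (by simpa using hK)
  have hK1 : ((2 : ℝ) ^ (σ (K + 1) + 1))⁻¹ ≤ (2 ^ (σ K + 2))⁻¹ :=
    inv_anti₀ (by positivity)
      (pow_le_pow_right₀ one_le_two (Nat.succ_le_succ (hσ (Nat.lt_succ_self K))))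
  have hsum := h.inv_two_pow_le_sum hσ
  have hhalf : ((2 : ℝ) ^ (σ K + 1))⁻¹ = 2 * (2 ^ (σ K + 2))⁻¹ := by
    rw [pow_succ _ (σ K + 1)]; ring
  rw [spreadDiff_eq_sum_add hσ (K + 1)]
  simp only [Function.comp_def, id, zero_add] at htail
  linarith

end BinaryBorrow

lemma abs_ofDigits_sub_le_of_eq_of_lt {α : ℝ} (hσ : StrictMono σ) (hα0 : 0 ≤ α) (hα : α ≤ 1)
    (hσα : ∀ t, α * σ t ≤ t) {N : ℕ} (hpre : ∀ t < N, a t = a' t) (haN : a N = 1)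
    (ha'N : a' N = 0) :
    |Real.ofDigits a - Real.ofDigits a'| ≤ 4 * |spreadDiff σ a a'| ^ α := by
  classical
  by_cases hforever : ∀ t, N < t → a t = 0 ∧ a' t = 1
  · have hzero : |Real.ofDigits a - Real.ofDigits a'| ≤ 0 :=
      ge_of_tendsto (tendsto_inv_atTop_zero.comp (tendsto_pow_atTop_atTop_of_one_lt one_lt_two))
        ((eventually_ge_atTop N).mono fun K hK =>
          BinaryBorrow.abs_ofDigits_sub_le ⟨hK, hpre, haN, ha'N, fun t h1 _ => hforever t h1⟩)
    exact hzero.trans (by positivity)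
  have hex : ∃ t, N < t ∧ ¬(a t = 0 ∧ a' t = 1) := by
    simpa only [not_forall, exists_prop] using hforever
  -- `K + 1` is the first place after `N` where the borrow stops.
  obtain ⟨hNM, hM⟩ := Nat.find_spec hex
  obtain ⟨K, hK⟩ : ∃ K, Nat.find hex = K + 1 := ⟨Nat.find hex - 1, by omega⟩
  have h : BinaryBorrow a a' N K := ⟨by omega, hpre, haN, ha'N, fun t h1 h2 => by
    simpa [h1] using Nat.find_min hex (show t < Nat.find hex by omega)⟩
  have hdigit : a' (K + 1) ≤ a (K + 1) := by
    have : ∀ x y : Fin 2, ¬(x = 0 ∧ y = 1) → y ≤ x := by decide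
    exact this _ _ (hK ▸ hM)
  calc |Real.ofDigits a - Real.ofDigits a'| ≤ (2 ^ K)⁻¹ := h.abs_ofDigits_sub_le
    _ ≤ 4 * ((2 ^ (σ K + 2))⁻¹ : ℝ) ^ α := inv_two_pow_le_four_mul_rpow hα (hσα K)
    _ ≤ 4 * |spreadDiff σ a a'| ^ α := by
      gcongr
      exact (h.inv_two_pow_le_spreadDiff hσ hdigit).trans (le_abs_self _)

theorem abs_ofDigits_sub_le_four_mul_rpow {α : ℝ} (hσ : StrictMono σ) (hα0 : 0 ≤ α)
    (hα : α ≤ 1) (hσα : ∀ t, α * σ t ≤ t) (a a' : ℕ → Fin 2) :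
    |Real.ofDigits a - Real.ofDigits a'| ≤ 4 * |spreadDiff σ a a'| ^ α := by
  classical
  rcases eq_or_ne a a' with rfl | hne
  · rw [sub_self, abs_zero]; positivity
  have hex : ∃ n, a n ≠ a' n := Function.ne_iff.1 hne
  have hpre : ∀ t < Nat.find hex, a t = a' t := fun t ht => not_not.1 (Nat.find_min hex ht)
  have : ∀ x y : Fin 2, x ≠ y → (x = 1 ∧ y = 0) ∨ (y = 1 ∧ x = 0) := by decide
  rcases this _ _ (Nat.find_spec hex) with ⟨h1, h0⟩ | ⟨h1, h0⟩
  · exact abs_ofDigits_sub_le_of_eq_of_lt hσ hα0 hα hσα hpre h1 h0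
  · rw [abs_sub_comm, ← abs_neg (spreadDiff σ a a'), ← spreadDiff_swap]
    exact abs_ofDigits_sub_le_of_eq_of_lt hσ hα0 hα hσα (fun t ht => (hpre t ht).symm) h1 h0

end spreadDiff

noncomputable def placeDigits (p : ℕ → Prop) [DecidablePred p] (b fill : ℕ → Fin 2) :
    ℕ → Fin 2 :=
  fun n => if p n then b (Nat.count p n) else fill n

lemma ofDigits_placeDigits_sub {p : ℕ → Prop} [DecidablePred p] (hp : {n | p n}.Infinite)
    (b b' fill : ℕ → Fin 2) :
    Real.ofDigits (placeDigits p b fill) - Real.ofDigits (placeDigits p b' fill)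
      = spreadDiff (Nat.nth p) b b' := by
  rw [ofDigits_sub_ofDigits, spreadDiff, spreadDiff]
  refine ((Nat.nth_strictMono hp).injective.tsum_eq fun n hn => ?_).symm.trans ?_
  · by_contra hpn
    have : ¬p n := fun h => hpn ⟨Nat.count p n, Nat.nth_count h⟩
    simp [placeDigits, this] at hn
  · congr 1; ext t
    simp [placeDigits, Nat.nth_mem_of_infinite hp, Nat.count_nth_of_infinite hp]

lemma Nat.count_add_of_forall {p : ℕ → Prop} [DecidablePred p] {a k : ℕ}
    (hp : ∀ i < k, p (a + i)) : Nat.count p (a + k) = Nat.count p a + k := by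
  rw [Nat.count_add, Nat.count_iff_forall.2 hp]

def IsFree (J T : ℕ → ℕ) (n : ℕ) : Prop := ∀ m, J m ≤ n → T m ≤ n

open scoped Classical in
noncomputable def blockDigits (J T : ℕ → ℕ) (b : ℕ → Fin 2) : ℕ → Fin 2 :=
  placeDigits (IsFree J T) b fun n => if n ∈ range J then 1 else 0

noncomputable def blockMap (J T : ℕ → ℕ) (y : ℝ) : ℝ :=
  Real.ofDigits (blockDigits J T (Real.digits y 2))

lemma blockMap_mem_Icc (J T : ℕ → ℕ) (y : ℝ) : blockMap J T y ∈ Icc (0 : ℝ) 1 :=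
  ⟨Real.ofDigits_nonneg _, Real.ofDigits_le_one _⟩

/-- The places in the blocks `[J m, T m)` are reserved; the density conditions make the free
places at least an `α`-fraction of every initial segment that ends at a free place
(`SparseBlocks.mul_le_count`). -/
structure SparseBlocks (α : ℝ) (J T : ℕ → ℕ) : Prop where
  lt : ∀ m, J m < T m
  lt_succ : ∀ m, T m < J (m + 1)
  density_zero : α * T 0 ≤ J 0
  density_succ : ∀ m, (1 - α) * T m + α * T (m + 1) ≤ J (m + 1)

namespace SparseBlocks

open scoped Classical

variable {α : ℝ} {J T : ℕ → ℕ}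

lemma strictMono_left (h : SparseBlocks α J T) : StrictMono J :=
  strictMono_nat_of_lt_succ fun m => (h.lt m).trans (h.lt_succ m)

lemma strictMono_right (h : SparseBlocks α J T) : StrictMono T :=
  strictMono_nat_of_lt_succ fun m => (h.lt_succ m).trans (h.lt (m + 1))

lemma lt_one (h : SparseBlocks α J T) : α < 1 := by
  by_contra! hα
  have h0 := h.density_zero
  have h1 : (J 0 : ℝ) < T 0 := by exact_mod_cast h.lt 0
  nlinarith

lemma isFree_of_lt (h : SparseBlocks α J T) {n : ℕ} (hn : n < J 0) : IsFree J T n :=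
  fun m hm => by have := h.strictMono_left.monotone (Nat.zero_le m); omega

lemma isFree_of_le_of_lt (h : SparseBlocks α J T) {m n : ℕ} (h1 : T m ≤ n) (h2 : n < J (m + 1)) :
    IsFree J T n := by
  intro m' hm'
  rcases le_or_gt m' m with hm | hm
  · exact (h.strictMono_right.monotone hm).trans h1
  · have := h.strictMono_left.monotone (show m + 1 ≤ m' by omega); omega

lemma infinite_setOf_isFree (h : SparseBlocks α J T) : {n | IsFree J T n}.Infinite :=
  Set.infinite_of_injective_forall_mem h.strictMono_right.injective
    fun m => h.isFree_of_le_of_lt le_rfl (h.lt_succ m)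

lemma mul_right_le_count (h : SparseBlocks α J T) (m : ℕ) :
    α * T m ≤ Nat.count (IsFree J T) (T m) := by
  have hmono := fun m => Nat.count_monotone (IsFree J T) (h.lt m).le
  induction m with
  | zero =>
    have hJ := Nat.count_add_of_forall (p := IsFree J T) (a := 0) (k := J 0)
      fun i hi => h.isFree_of_lt (by omega)
    rw [zero_add, Nat.count_zero, zero_add] at hJ
    have : (J 0 : ℝ) ≤ Nat.count (IsFree J T) (T 0) := by exact_mod_cast hJ ▸ hmono 0
    linarith [h.density_zero]
  | succ m ih =>
    obtain ⟨k, hk⟩ : ∃ k, J (m + 1) = T m + k := ⟨_, (Nat.add_sub_of_le (h.lt_succ m).le).symm⟩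
    have hgap := Nat.count_add_of_forall (p := IsFree J T) (a := T m) (k := k)
      fun i hi => h.isFree_of_le_of_lt (m := m) (by omega) (by omega)
    have : (Nat.count (IsFree J T) (T m) : ℝ) + k ≤ Nat.count (IsFree J T) (T (m + 1)) := by
      exact_mod_cast hgap ▸ hk ▸ hmono (m + 1)
    have hkR : (J (m + 1) : ℝ) = T m + k := by exact_mod_cast hk
    linarith [h.density_succ m]

lemma mul_le_count (h : SparseBlocks α J T) {n : ℕ} (hn : IsFree J T n) :
    α * n ≤ Nat.count (IsFree J T) n := by
  induction n with
  | zero => simp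
  | succ n ih =>
    by_cases hfree : IsFree J T n
    · rw [Nat.count_succ, if_pos hfree]
      push_cast
      linarith [ih hfree, h.lt_one]
    · obtain ⟨m, h1, h2⟩ : ∃ m, J m ≤ n ∧ n < T m := by
        simpa [IsFree] using hfree
      have : n + 1 = T m := le_antisymm h2 (hn m (by omega))
      rw [this]
      exact_mod_cast h.mul_right_le_count m

lemma mul_nth_le (h : SparseBlocks α J T) (t : ℕ) : α * Nat.nth (IsFree J T) t ≤ t := by
  have := h.mul_le_count (Nat.nth_mem_of_infinite h.infinite_setOf_isFree t)
  rwa [Nat.count_nth_of_infinite h.infinite_setOf_isFree] at this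

lemma blockDigits_left (h : SparseBlocks α J T) (b : ℕ → Fin 2) (m : ℕ) :
    blockDigits J T b (J m) = 1 := by
  have : ¬IsFree J T (J m) := fun hf => (hf m le_rfl).not_gt (h.lt m)
  simp [blockDigits, placeDigits, this]

lemma blockDigits_eq_zero (h : SparseBlocks α J T) (b : ℕ → Fin 2) {m n : ℕ} (h1 : J m < n)
    (h2 : n < T m) : blockDigits J T b n = 0 := by
  have hfree : ¬IsFree J T n := fun hf => (hf m h1.le).not_gt h2
  have hn : n ∉ range J := by
    rintro ⟨m', rfl⟩
    have hm : m < m' := h.strictMono_left.lt_iff_lt.1 h1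
    have := h.strictMono_left.monotone (show m + 1 ≤ m' from hm)
    have := h.lt_succ m
    omega
  simp [blockDigits, placeDigits, hfree, hn]

lemma exists_abs_blockMap_sub_le (h : SparseBlocks α J T) (y : ℝ) (m : ℕ) :
    ∃ k : Fin (2 ^ J m), |blockMap J T y - ((k : ℝ) + 1 / 2) / 2 ^ J m| ≤ (2 ^ T m)⁻¹ :=
  exists_abs_ofDigits_sub_le (h.lt m) (h.blockDigits_left _ m)
    fun _ h1 h2 => h.blockDigits_eq_zero _ h1 h2

lemma abs_sub_le_blockMap (h : SparseBlocks α J T) (hα : 0 ≤ α) {y y' : ℝ}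
    (hy : y ∈ Ico (0 : ℝ) 1) (hy' : y' ∈ Ico (0 : ℝ) 1) :
    |y - y'| ≤ 4 * |blockMap J T y - blockMap J T y'| ^ α := by
  calc |y - y'| = |Real.ofDigits (Real.digits y 2) - Real.ofDigits (Real.digits y' 2)| := by
        rw [Real.ofDigits_digits one_lt_two hy, Real.ofDigits_digits one_lt_two hy']
    _ ≤ _ := abs_ofDigits_sub_le_four_mul_rpow (Nat.nth_strictMono h.infinite_setOf_isFree)
        hα h.lt_one.le h.mul_nth_le _ _
    _ = _ := by
        rw [blockMap, blockMap, blockDigits, blockDigits,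
          ofDigits_placeDigits_sub h.infinite_setOf_isFree]

end SparseBlocks

lemma exists_strictMono_forall_le_comp_succ {j : ℕ → ℕ} (hj : StrictMono j) (c : ℝ)
    (G : ℕ → ℝ) :
    ∃ p : ℕ → ℕ, StrictMono p ∧ c ≤ j (p 0) ∧ ∀ m, G (j (p m)) ≤ j (p (m + 1)) := by
  let p : ℕ → ℕ := fun m => Nat.rec ⌈c⌉₊ (fun _ q => max (q + 1) ⌈G (j q)⌉₊) m
  have hsucc : ∀ m, p (m + 1) = max (p m + 1) ⌈G (j (p m))⌉₊ := fun _ => rfl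
  refine ⟨p, strictMono_nat_of_lt_succ fun m => ?_, ?_, fun m => ?_⟩
  · rw [hsucc]; exact Nat.lt_of_succ_le (le_max_left _ _)
  · exact (Nat.le_ceil c).trans (by exact_mod_cast hj.le_apply)
  · calc G (j (p m)) ≤ ⌈G (j (p m))⌉₊ := Nat.le_ceil _
      _ ≤ p (m + 1) := by rw [hsucc]; exact_mod_cast le_max_right _ _
      _ ≤ j (p (m + 1)) := by exact_mod_cast hj.le_apply

lemma exists_sparseBlocks {j : ℕ → ℕ} {θ α : ℝ} (hθ : 1 ≤ θ) (hj : StrictMono j) (hα : 0 < α)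
    (hαθ : α * θ < 1) :
    ∃ p : ℕ → ℕ, StrictMono p ∧ SparseBlocks α (j ∘ p) fun m => ⌊θ * j (p m)⌋₊ + 1 := by
  set ε := 1 - α * θ with hε_def
  have hε : 0 < ε := by linarith
  -- all four conditions follow from `1 ≤ ε J₀` and `T m + 1 ≤ ε J_{m+1}`
  obtain ⟨p, hp, h0, hsucc⟩ :=
    exists_strictMono_forall_le_comp_succ hj (1 / ε) fun J => (⌊θ * J⌋₊ + 2) / ε
  refine ⟨p, hp, ?_⟩
  have hJ0 : 1 ≤ ε * j (p 0) := by rwa [div_le_iff₀' hε] at h0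
  have hJ : ∀ m, (⌊θ * j (p m)⌋₊ : ℝ) + 2 ≤ ε * j (p (m + 1)) := fun m => by
    have := hsucc m; rwa [div_le_iff₀' hε] at this
  have hfloor : ∀ m, (⌊θ * j (p m)⌋₊ : ℝ) ≤ θ * j (p m) := fun m => Nat.floor_le (by positivity)
  have hcast : ∀ m, (0 : ℝ) ≤ j (p m) := fun m => Nat.cast_nonneg _
  have hα1 : α ≤ 1 := by nlinarith
  refine ⟨fun m => ?_, fun m => ?_, ?_, fun m => ?_⟩ <;> simp only [Function.comp_apply]
  · have := Nat.lt_floor_add_one (θ * j (p m))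
    have : (j (p m) : ℝ) < (⌊θ * j (p m)⌋₊ + 1 : ℕ) := by push_cast; nlinarith [hcast m]
    exact_mod_cast this
  · have : ((⌊θ * j (p m)⌋₊ + 1 : ℕ) : ℝ) < j (p (m + 1)) := by
      push_cast
      nlinarith [hJ m, mul_nonneg (mul_nonneg hα.le (by linarith : (0 : ℝ) ≤ θ)) (hcast (m + 1))]
    exact_mod_cast this
  · push_cast; nlinarith [hfloor 0, hcast 0]
  · push_cast
    nlinarith [hfloor (m + 1), hJ m, hcast (m + 1), Nat.cast_nonneg (α := ℝ) ⌊θ * j (p m)⌋₊]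

lemma card_mul_two_mul_rpow_eq {d : ℕ} {θ s : ℝ} (J : ℕ) :
    (Fintype.card (Fin d → Fin (2 ^ J)) : ℝ) * (2 * (2 : ℝ) ^ (-(θ * J))) ^ s
      = 2 ^ s * ((2 : ℝ) ^ ((d : ℝ) - θ * s)) ^ J := by
  have h2 : (0 : ℝ) < 2 := two_pos
  simp only [Fintype.card_fun, Fintype.card_fin, Nat.cast_pow, Nat.cast_ofNat]
  rw [Real.mul_rpow h2.le (by positivity), ← Real.rpow_mul h2.le, ← Real.rpow_natCast (2 ^ J) d,
    ← Real.rpow_natCast 2 J, ← Real.rpow_mul h2.le, ← Real.rpow_natCast (2 ^ _) J,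
    ← Real.rpow_mul h2.le, mul_left_comm, ← Real.rpow_add h2]
  ring_nf

lemma hausdorffMeasure_atheta_eq_zero {d : ℕ} {θ : ℝ} {j : ℕ → ℕ} (hθ : 0 < θ)
    (hj : Function.Injective j) {s : ℝ} (hs : d / θ < s) : μH[s] (atheta d θ j) = 0 := by
  have hs0 : 0 < s := lt_of_le_of_lt (by positivity) hs
  have hq : (2 : ℝ) ^ ((d : ℝ) - θ * s) < 1 :=
    Real.rpow_lt_one_of_one_lt_of_neg one_lt_two (by rw [div_lt_iff₀ hθ] at hs; linarith)
  have hsum : Summable fun n =>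
      (Fintype.card (Fin d → Fin (2 ^ j n)) : ℝ) * (2 * (2 : ℝ) ^ (-(θ * j n))) ^ s := by
    simp_rw [card_mul_two_mul_rpow_eq]
    exact ((summable_geometric_of_lt_one (by positivity) hq).comp_injective hj).mul_left _
  refine measure_mono_null (fun x hx => ?_) (hausdorffMeasure_limsup_iUnion_closedBall_eq_zero
    (fun n (k : Fin d → Fin (2 ^ j n)) i => ((k i : ℝ) + 1 / 2) / 2 ^ j n)
    (fun n => by positivity) hs0 hsum)
  rw [mem_limsup_iff_frequently_mem, frequently_atTop]
  exact hx.2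

lemma dimH_atheta_le {d : ℕ} {θ : ℝ} {j : ℕ → ℕ} (hθ : 0 < θ) (hj : Function.Injective j) :
    dimH (atheta d θ j) ≤ ENNReal.ofReal (d / θ) := by
  refine dimH_le fun s hs => le_of_not_gt fun hlt => ?_
  have hs' : (d : ℝ) / θ < s := by
    rwa [← ENNReal.ofReal_coe_nnreal, ENNReal.ofReal_lt_ofReal_iff_of_nonneg (by positivity)] at hlt
  simp [hausdorffMeasure_atheta_eq_zero hθ hj hs'] at hs

lemma mem_atheta_of_sparseBlocks {d : ℕ} {θ α : ℝ} {j p T : ℕ → ℕ} (hp : StrictMono p)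
    (h : SparseBlocks α (j ∘ p) T) (hT : ∀ m, θ * j (p m) ≤ T m) (y : Fin d → ℝ) :
    (fun i => blockMap (j ∘ p) T (y i)) ∈ atheta d θ j := by
  refine ⟨⟨fun i => (blockMap_mem_Icc _ _ _).1, fun i => (blockMap_mem_Icc _ _ _).2⟩,
    fun P => ⟨p P, hp.le_apply, ?_⟩⟩
  choose k hk using fun i => h.exists_abs_blockMap_sub_le (y i) P
  refine mem_iUnion.2 ⟨k, (dist_pi_le_iff (by positivity)).2 fun i => ?_⟩
  rw [Real.dist_eq]
  refine (hk i).trans ?_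
  rw [Real.rpow_neg two_pos.le, ← Real.rpow_natCast]
  gcongr
  · norm_num
  · exact hT P

lemma ofReal_mul_le_dimH_atheta {d : ℕ} {θ α : ℝ} {j : ℕ → ℕ} (hθ : 1 ≤ θ) (hj : StrictMono j)
    (hα : 0 < α) (hαθ : α * θ < 1) : ENNReal.ofReal (d * α) ≤ dimH (atheta d θ j) := by
  obtain ⟨p, hp, h⟩ := exists_sparseBlocks hθ hj hα hαθ
  set F : (Fin d → ℝ) → Fin d → ℝ := fun y i => blockMap (j ∘ p) _ (y i)
  set S : Set (Fin d → ℝ) := univ.pi fun _ => Ico 0 1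
  have hS : dimH S = d := by
    rw [Real.dimH_of_mem_nhds (x := fun _ => 1 / 2), Module.finrank_fin_fun]
    exact set_pi_mem_nhds finite_univ fun _ _ => Ico_mem_nhds (by norm_num) (by norm_num)
  have hF : ∀ y ∈ S, ∀ y' ∈ S,
      dist y y' ≤ (4 : ℝ≥0) * dist (F y) (F y') ^ ((α.toNNReal : ℝ≥0) : ℝ) := by
    intro y hy y' hy'
    rw [Real.coe_toNNReal _ hα.le]
    refine (dist_pi_le_iff (by positivity)).2 fun i => ?_
    rw [Real.dist_eq]
    refine (h.abs_sub_le_blockMap hα.le (hy i trivial) (hy' i trivial)).trans ?_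
    push_cast
    gcongr
    rw [← Real.dist_eq]
    exact dist_le_pi_dist (F y) (F y') i
  have hdim := dimH_le_dimH_image_div_of_dist_le (Real.toNNReal_pos.2 hα) hF
  rw [hS, ENNReal.le_div_iff_mul_le (by simp [hα]) (by simp)] at hdim
  calc ENNReal.ofReal (d * α) = d * α.toNNReal := by
        rw [ENNReal.ofReal_mul (Nat.cast_nonneg _), ENNReal.ofReal_natCast]; rfl
    _ ≤ dimH (F '' S) := hdim
    _ ≤ dimH (atheta d θ j) := dimH_mono <| image_subset_iff.2 fun y _ =>
        mem_atheta_of_sparseBlocks hp h (fun m => by exact_mod_cast (Nat.lt_floor_add_one _).le) y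

theorem dimH_atheta_eq_general (d : ℕ) (θ : ℝ) (hθ : 1 ≤ θ)
    (j : ℕ → ℕ) (hj : StrictMono j) :
    dimH (atheta d θ j) = ENNReal.ofReal ((d : ℝ) / θ) := by
  refine le_antisymm (dimH_atheta_le (by linarith) hj.injective)
    (ENNReal.le_of_forall_nnreal_lt fun r hr => ?_)
  rcases eq_zero_or_pos r with rfl | hr0
  · simp
  have hrθ : (r : ℝ) < d / θ := by
    rwa [← ENNReal.ofReal_coe_nnreal, ENNReal.ofReal_lt_ofReal_iff_of_nonneg r.coe_nonneg] at hr
  have hd : (0 : ℝ) < d :=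
    (div_pos_iff_of_pos_right (by linarith)).1 ((NNReal.coe_pos.2 hr0).trans hrθ)
  have hα : (r : ℝ) / d * θ < 1 := by
    rw [div_mul_eq_mul_div, div_lt_one hd]
    rwa [lt_div_iff₀ (by linarith)] at hrθ
  have := ofReal_mul_le_dimH_atheta (d := d) hθ hj (by positivity) hα
  rwa [mul_div_cancel₀ _ hd.ne', ENNReal.ofReal_coe_nnreal] at this

/-- For `θ ≥ 1` and any strictly increasing sequence `(j_p)` of positive
integers, `dim_H A_θ = d/θ`. -/
theorem dimH_atheta_eq (d : ℕ) (hd : 1 ≤ d) (θ : ℝ) (hθ : 1 ≤ θ)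
    (j : ℕ → ℕ) (hj : StrictMono j) (hj1 : ∀ p, 1 ≤ j p) :
    dimH (atheta d θ j) = ENNReal.ofReal ((d : ℝ) / θ) :=
  dimH_atheta_eq_general d θ hθ j hj
end
end
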